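/- arXiv:math/0604509 — 3 statements merged into one kernel-verified Lean document; each statement's English description precedes it below -/
import Mathlib

section
/- Let {W_j} (j ∈ ℕ) be Bloch subdomains of the unit disc D such that there exists C > 0 with Bloch radius R(W_j) < C for all j. If {g_j} is a sequence of holomorphic self-maps of D with g_j(D) ⊆ W_j for all j, then every limit (in the compact-open topology) of the iterated function system {g_j ∘ ⋯ ∘ g_1} is a constant map. -/
open Metric Set Filter
open scoped ENNReal NNReal

noncomputable section

/-- The open unit disc in `ℂ`. -/
def uDisc : Set ℂ := Metric.ball 0 1

/-- The inverse hyperbolic tangent. -/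
def artanh (x : ℝ) : ℝ := Real.log ((1 + x) / (1 - x)) / 2

/-- The Poincaré (hyperbolic) distance on the unit disc. -/
def pDist (ζ η : ℂ) : ℝ :=
  artanh ‖(ζ - η) / (1 - (starRingEnd ℂ) ζ * η)‖

/-- Hyperbolic ball in the unit disc. -/
def hBall (z : ℂ) (r : ℝ) : Set ℂ := {w ∈ uDisc | pDist w z < r}

/-- Bloch radius of a subset of the unit disc. -/
def blochRadiusD (U : Set ℂ) : ℝ≥0∞ :=
  ⨆ (r : NNReal) (_ : ∃ z ∈ uDisc, hBall z (r : ℝ) ⊆ U), (r : ℝ≥0∞)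

/-- `tanh` extended to `ℝ≥0∞`, with `tanh ∞ = 1`. -/
def tanhE (x : ℝ≥0∞) : ℝ := if x = ⊤ then 1 else Real.tanh x.toReal

variable {E : Type*} [NormedAddCommGroup E] [NormedSpace ℂ E]

/-- Admissible values for the Lempert function of `D` between `z` and `w`. -/
def lemSet (D : Set E) (z w : E) : Set ℝ :=
  {c | ∃ (f : ℂ → E) (ζ : ℂ), DifferentiableOn ℂ f uDisc ∧ MapsTo f uDisc D ∧
    f 0 = z ∧ ζ ∈ uDisc ∧ f ζ = w ∧ c = pDist 0 ζ}

/-- The Kobayashi (pseudo)distance of `D`, defined via chains of analytic discs. -/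
def kDist (D : Set E) (z w : E) : ℝ :=
  sInf {s | ∃ (m : ℕ) (p : ℕ → E), p 0 = z ∧ p m = w ∧ (∀ i, i ≤ m → p i ∈ D) ∧
      s = ∑ i ∈ Finset.range m, sInf (lemSet D (p i) (p (i + 1)))}

/-- Kobayashi ball of center `z` and radius `r` in `D`. -/
def kBall (D : Set E) (z : E) (r : ℝ) : Set E := {w ∈ D | kDist D w z < r}

/-- Bloch radius of `X ⊆ D` with respect to the Kobayashi distance of `D`. -/
def blochRadius (D X : Set E) : ℝ≥0∞ :=
  ⨆ (r : NNReal) (_ : ∃ z ∈ D, kBall D z (r : ℝ) ⊆ X), (r : ℝ≥0∞)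

/-- The Kobayashi infinitesimal (pseudo)metric of `D`. -/
def kMetric (D : Set E) (z v : E) : ℝ :=
  sInf {c | ∃ (f : ℂ → E) (r : ℝ), DifferentiableOn ℂ f uDisc ∧ MapsTo f uDisc D ∧
    f 0 = z ∧ 0 < r ∧ deriv f 0 = r • v ∧ c = 1 / r}

/-- The hyperbolic Lipschitz constant `μ_D(X)` of `X` inside `D`. -/
def lipConst (D X : Set E) : ℝ :=
  sSup {t | ∃ z ∈ X, ∃ v : E, v ≠ 0 ∧ t = kMetric D z v / kMetric X z v}

/-- `comps f j = f j ∘ ⋯ ∘ f 0`, the iterated function system associated to `f`. -/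
def comps (f : ℕ → E → E) : ℕ → E → E
  | 0 => f 0
  | (j + 1) => f (j + 1) ∘ comps f j

/-- `F` is a limit, in the compact-open topology on `D`, of a subsequence of the
iterated function system associated to `f`. -/
def IFSLimit (D : Set E) (f : ℕ → E → E) (F : E → E) : Prop :=
  ∃ s : ℕ → ℕ, StrictMono s ∧
    TendstoLocallyUniformlyOn (fun j => comps f (s j)) F atTop D

/-- `X ⊆ D` is degenerate in `D`: every limit of every iterated function system of
holomorphic self-maps of `D` with image in `X` is constant. -/
def Degenerate (D X : Set E) : Prop :=
  ∀ f : ℕ → E → E, (∀ j, DifferentiableOn ℂ (f j) D ∧ MapsTo (f j) D X) →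
    ∀ F : E → E, IFSLimit D f F → ∃ c, ∀ z ∈ D, F z = c

/-- A complex geodesic of `D`: a holomorphic isometry from the Poincaré distance of
the unit disc to the Kobayashi distance of `D`. -/
def IsComplexGeodesic (D : Set E) (φ : ℂ → E) : Prop :=
  DifferentiableOn ℂ φ uDisc ∧ MapsTo φ uDisc D ∧
    ∀ ζ ∈ uDisc, ∀ η ∈ uDisc, kDist D (φ ζ) (φ η) = pDist ζ η

/-- A Lempert projection associated to the complex geodesic `φ`: a holomorphic
retraction of `D` onto `φ(𝔻)` with affine fibers. -/
def IsLempertProjection (D : Set E) (φ : ℂ → E) (ρ : E → E) : Prop :=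
  DifferentiableOn ℂ ρ D ∧ MapsTo ρ D (φ '' uDisc) ∧
    (∀ z ∈ D, ρ (ρ z) = ρ z) ∧ (∀ ζ ∈ uDisc, ρ (φ ζ) = φ ζ) ∧
    ∀ ζ ∈ uDisc, ∃ (L : E →ₗ[ℂ] ℂ) (c : ℂ), L ≠ 0 ∧
      {w ∈ D | ρ w = φ ζ} = {w ∈ D | L w = c}

/-- A Lempert projection device `(φ, ρ, ρ̃)`: a complex geodesic, an associated
Lempert projection, and the left inverse `ρ̃ = φ⁻¹ ∘ ρ`. -/
def IsLempertDevice (D : Set E) (φ : ℂ → E) (ρ : E → E) (ρt : E → ℂ) : Prop :=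
  IsComplexGeodesic D φ ∧ IsLempertProjection D φ ρ ∧
    ∀ z ∈ D, ρt z ∈ uDisc ∧ φ (ρt z) = ρ z

/-- `X` is 1-Bloch in `D`: there is `C > 0` such that for every Lempert projection
device, `ρ̃(X)` is contained in a Bloch subdomain of the disc of Bloch radius `< C`. -/
def OneBloch (D X : Set E) : Prop :=
  ∃ C > (0 : ℝ), ∀ (φ : ℂ → E) (ρ : E → E) (ρt : E → ℂ),
    IsLempertDevice D φ ρ ρt → ∃ U : Set ℂ, IsOpen U ∧ IsConnected U ∧ U ⊆ uDisc ∧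
      ρt '' X ⊆ U ∧ blochRadiusD U < ENNReal.ofReal C

/-- `X` is c-Bloch in `D`: there is `C > 0` such that for every Lempert projection
device, `ρ̃(X ∩ φ(𝔻))` is contained in a Bloch subdomain of Bloch radius `≤ C`. -/
def CBloch (D X : Set E) : Prop :=
  ∃ C > (0 : ℝ), ∀ (φ : ℂ → E) (ρ : E → E) (ρt : E → ℂ),
    IsLempertDevice D φ ρ ρt → ∃ U : Set ℂ, IsOpen U ∧ IsConnected U ∧ U ⊆ uDisc ∧
      ρt '' (X ∩ φ '' uDisc) ⊆ U ∧ blochRadiusD U ≤ ENNReal.ofReal C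

/-!
Work with the pseudo-hyperbolic distance `ρ(z, w) = |z - w| / |1 - z̄ w|` (`pseudoHypDist`), so
that the Poincaré distance is `artanh ρ`; it satisfies `ρ(x, z) ≤ m(ρ(x, y), ρ(y, z))` with
`m(p, q) = (p + q) / (1 + p q)` (`tanhAdd`).

Since `R(W_j) < C`, every point of `W_j` is within `ρ`-distance `tanh C` of a point `q ∉ W_j`.
If `g` maps `D` into `W_j`, then `h = φ_q ∘ g`, with `φ_q` the Möbius map sending `q` to `0`,
omits `0` and so has a holomorphic square root `r : D → D` with `|r a| ≤ √(tanh C)`. From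
`ρ(x², y²) = ρ(x, y) ρ(x, -y)` and Schwarz–Pick for `r`, we get `ρ(g a, g b) ≤ κ ρ(a, b)` with
`κ < 1` depending only on `C` and on an upper bound `ε < 1` for `ρ(a, b)`. Hence
`ρ(G_n z, G_n w) ≤ κⁿ⁺¹ ρ(z, w)`, and every limit of a subsequence of `G_n` is constant.
-/

open scoped Topology ComplexConjugate

def tanhAdd (p q : ℝ) : ℝ := (p + q) / (1 + p * q)

lemma tanhAdd_nonneg {p q : ℝ} (hp : 0 ≤ p) (hq : 0 ≤ q) : 0 ≤ tanhAdd p q := by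
  unfold tanhAdd; positivity

lemma tanhAdd_lt_one {p q : ℝ} (hp : 0 ≤ p) (hp1 : p < 1) (hq : 0 ≤ q) (hq1 : q < 1) :
    tanhAdd p q < 1 := by
  rw [tanhAdd, div_lt_one (by positivity)]
  nlinarith [mul_pos (sub_pos.2 hp1) (sub_pos.2 hq1)]

lemma tanhAdd_le_one {p q : ℝ} (hp : 0 ≤ p) (hp1 : p ≤ 1) (hq : 0 ≤ q) (hq1 : q ≤ 1) :
    tanhAdd p q ≤ 1 := by
  rw [tanhAdd, div_le_one (by positivity)]
  nlinarith [mul_nonneg (sub_nonneg.2 hp1) (sub_nonneg.2 hq1)]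

lemma tanhAdd_le_tanhAdd {p p' q q' : ℝ} (hp : 0 ≤ p) (hpp' : p ≤ p') (hp' : p' ≤ 1)
    (hq : 0 ≤ q) (hqq' : q ≤ q') (hq' : q' ≤ 1) : tanhAdd p q ≤ tanhAdd p' q' := by
  rw [tanhAdd, tanhAdd, div_le_div_iff₀ (by positivity) (by nlinarith)]
  nlinarith [mul_nonneg (sub_nonneg.2 hpp') (sub_nonneg.2 hqq'),
    mul_nonneg (sub_nonneg.2 hpp') (mul_nonneg (sub_nonneg.2 hq') (add_nonneg hq (hq.trans hqq'))),
    mul_nonneg (sub_nonneg.2 hqq') (mul_nonneg (sub_nonneg.2 hp') (add_nonneg hp (hp.trans hpp')))]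

lemma one_sub_tanhAdd_sq {p q : ℝ} (hp : 0 ≤ p) (hq : 0 ≤ q) :
    1 - tanhAdd p q ^ 2 = (1 - p ^ 2) * (1 - q ^ 2) / (1 + p * q) ^ 2 := by
  rw [tanhAdd, div_pow, eq_div_iff (by positivity), sub_mul, div_mul_cancel₀ _ (by positivity)]
  ring

lemma mem_uDisc {z : ℂ} : z ∈ uDisc ↔ ‖z‖ < 1 := mem_ball_zero_iff

def pseudoHypDist (z w : ℂ) : ℝ := ‖(z - w) / (1 - conj z * w)‖

lemma pDist_eq_artanh (z w : ℂ) : pDist z w = artanh (pseudoHypDist z w) := rfl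

lemma pseudoHypDist_nonneg (z w : ℂ) : 0 ≤ pseudoHypDist z w := norm_nonneg _

lemma norm_one_sub_conj_mul_comm (z w : ℂ) : ‖1 - conj z * w‖ = ‖1 - conj w * z‖ := by
  rw [← Complex.norm_conj, map_sub, map_one, map_mul, Complex.conj_conj, mul_comm]

lemma pseudoHypDist_comm (z w : ℂ) : pseudoHypDist z w = pseudoHypDist w z := by
  rw [pseudoHypDist, pseudoHypDist, norm_div, norm_div, norm_sub_rev, norm_one_sub_conj_mul_comm]

@[simp] lemma pseudoHypDist_zero_right (z : ℂ) : pseudoHypDist z 0 = ‖z‖ := by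
  simp [pseudoHypDist]

lemma one_sub_conj_mul_ne_zero {z w : ℂ} (hz : z ∈ uDisc) (hw : w ∈ uDisc) :
    1 - conj z * w ≠ 0 := by
  rw [mem_uDisc] at hz hw
  refine sub_ne_zero.2 fun h => ?_
  have : ‖conj z * w‖ < 1 := by
    rw [norm_mul, Complex.norm_conj]
    nlinarith [norm_nonneg z, norm_nonneg w]
  rw [← h, norm_one] at this
  exact this.false

lemma norm_one_sub_conj_mul_sq_sub_norm_sub_sq (z w : ℂ) :
    ‖1 - conj z * w‖ ^ 2 - ‖z - w‖ ^ 2 = (1 - ‖z‖ ^ 2) * (1 - ‖w‖ ^ 2) := by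
  simp only [← Complex.normSq_eq_norm_sq, Complex.normSq_apply, Complex.sub_re, Complex.sub_im,
    Complex.mul_re, Complex.mul_im, Complex.one_re, Complex.one_im, Complex.conj_re,
    Complex.conj_im]
  ring

lemma one_sub_pseudoHypDist_sq {z w : ℂ} (hz : z ∈ uDisc) (hw : w ∈ uDisc) :
    1 - pseudoHypDist z w ^ 2 = (1 - ‖z‖ ^ 2) * (1 - ‖w‖ ^ 2) / ‖1 - conj z * w‖ ^ 2 := by
  have hd : ‖1 - conj z * w‖ ≠ 0 := norm_ne_zero_iff.2 (one_sub_conj_mul_ne_zero hz hw)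
  rw [← norm_one_sub_conj_mul_sq_sub_norm_sub_sq, pseudoHypDist, norm_div, div_pow, sub_div,
    div_self (pow_ne_zero 2 hd)]

lemma pseudoHypDist_lt_one {z w : ℂ} (hz : z ∈ uDisc) (hw : w ∈ uDisc) :
    pseudoHypDist z w < 1 := by
  have hpos : 0 < 1 - pseudoHypDist z w ^ 2 := by
    rw [one_sub_pseudoHypDist_sq hz hw]
    have hd := norm_pos_iff.2 (one_sub_conj_mul_ne_zero hz hw)
    rw [mem_uDisc] at hz hw
    have hz' : 0 < 1 - ‖z‖ ^ 2 := by nlinarith [norm_nonneg z]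
    have hw' : 0 < 1 - ‖w‖ ^ 2 := by nlinarith [norm_nonneg w]
    positivity
  nlinarith [pseudoHypDist_nonneg z w]

def mobius (a z : ℂ) : ℂ := (z - a) / (1 - conj a * z)

lemma norm_mobius (a z : ℂ) : ‖mobius a z‖ = pseudoHypDist z a := by
  rw [mobius, pseudoHypDist, norm_div, norm_div, norm_one_sub_conj_mul_comm]

@[simp] lemma mobius_self (a : ℂ) : mobius a a = 0 := by simp [mobius]

@[simp] lemma mobius_neg_zero (a : ℂ) : mobius (-a) 0 = a := by simp [mobius]

lemma mobius_mem {a z : ℂ} (ha : a ∈ uDisc) (hz : z ∈ uDisc) : mobius a z ∈ uDisc := by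
  rw [mem_uDisc, norm_mobius]
  exact pseudoHypDist_lt_one hz ha

lemma mapsTo_mobius {a : ℂ} (ha : a ∈ uDisc) : MapsTo (mobius a) uDisc uDisc :=
  fun _ hz => mobius_mem ha hz

lemma differentiableOn_mobius {a : ℂ} (ha : a ∈ uDisc) : DifferentiableOn ℂ (mobius a) uDisc :=
  (differentiableOn_id.sub_const a).div ((differentiableOn_const 1).sub
    (differentiableOn_id.const_mul _)) fun _ hz => one_sub_conj_mul_ne_zero ha hz

lemma mobius_neg_mobius {a z : ℂ} (ha : a ∈ uDisc) (hz : z ∈ uDisc) :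
    mobius (-a) (mobius a z) = z := by
  have h1 := one_sub_conj_mul_ne_zero ha hz
  have h2 := one_sub_conj_mul_ne_zero ha ha
  have hnum : mobius a z - -a = z * (1 - conj a * a) / (1 - conj a * z) := by
    rw [eq_div_iff h1, mobius, sub_neg_eq_add, add_mul, div_mul_cancel₀ _ h1]; ring
  have hden : 1 - conj (-a) * mobius a z = (1 - conj a * a) / (1 - conj a * z) := by
    rw [eq_div_iff h1, mobius, map_neg, neg_mul, sub_neg_eq_add, add_mul, mul_assoc,
      div_mul_cancel₀ _ h1]
    ring
  rw [mobius, hnum, hden, div_div_div_cancel_right₀ h1, mul_div_cancel_right₀ _ h2]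

lemma mobius_sub_mobius {a x y : ℂ} (ha : a ∈ uDisc) (hx : x ∈ uDisc) (hy : y ∈ uDisc) :
    mobius a x - mobius a y
      = (x - y) * (1 - conj a * a) / ((1 - conj a * x) * (1 - conj a * y)) := by
  rw [mobius, mobius, div_sub_div _ _ (one_sub_conj_mul_ne_zero ha hx)
    (one_sub_conj_mul_ne_zero ha hy)]
  ring

lemma one_sub_conj_mobius_mul_mobius {a x y : ℂ} (ha : a ∈ uDisc) (hx : x ∈ uDisc)
    (hy : y ∈ uDisc) :
    1 - conj (mobius a x) * mobius a y
      = (1 - conj x * y) * (1 - conj a * a) / ((1 - a * conj x) * (1 - conj a * y)) := by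
  have hxa : 1 - a * conj x ≠ 0 := by
    simpa [mul_comm] using one_sub_conj_mul_ne_zero hx ha
  simp only [mobius, map_div₀, map_sub, map_mul, map_one, Complex.conj_conj]
  rw [div_mul_div_comm, one_sub_div (mul_ne_zero hxa (one_sub_conj_mul_ne_zero ha hy))]
  ring

lemma pseudoHypDist_mobius {a x y : ℂ} (ha : a ∈ uDisc) (hx : x ∈ uDisc) (hy : y ∈ uDisc) :
    pseudoHypDist (mobius a x) (mobius a y) = pseudoHypDist x y := by
  have haa : ‖1 - conj a * a‖ ≠ 0 := norm_ne_zero_iff.2 (one_sub_conj_mul_ne_zero ha ha)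
  have hax : ‖1 - a * conj x‖ = ‖1 - conj a * x‖ := by
    rw [mul_comm, norm_one_sub_conj_mul_comm]
  have hd : ‖1 - conj a * x‖ * ‖1 - conj a * y‖ ≠ 0 := mul_ne_zero
    (norm_ne_zero_iff.2 (one_sub_conj_mul_ne_zero ha hx))
    (norm_ne_zero_iff.2 (one_sub_conj_mul_ne_zero ha hy))
  rw [pseudoHypDist, mobius_sub_mobius ha hx hy, one_sub_conj_mobius_mul_mobius ha hx hy,
    pseudoHypDist]
  simp only [norm_div, norm_mul, hax]
  rw [div_div_div_cancel_right₀ hd, mul_div_mul_right _ _ haa]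

lemma pseudoHypDist_le_tanhAdd_norm {x y : ℂ} (hx : x ∈ uDisc) (hy : y ∈ uDisc) :
    pseudoHypDist x y ≤ tanhAdd ‖x‖ ‖y‖ := by
  have hden : 0 < ‖1 - conj x * y‖ := norm_pos_iff.2 (one_sub_conj_mul_ne_zero hx hy)
  have hle : ‖1 - conj x * y‖ ≤ 1 + ‖x‖ * ‖y‖ := by
    simpa [norm_mul] using norm_sub_le (1 : ℂ) (conj x * y)
  have hsq : 1 - tanhAdd ‖x‖ ‖y‖ ^ 2 ≤ 1 - pseudoHypDist x y ^ 2 := by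
    rw [one_sub_tanhAdd_sq (norm_nonneg x) (norm_nonneg y), one_sub_pseudoHypDist_sq hx hy]
    rw [mem_uDisc] at hx hy
    refine div_le_div_of_nonneg_left ?_ (by positivity) (by gcongr)
    apply mul_nonneg <;> nlinarith [norm_nonneg x, norm_nonneg y]
  nlinarith [pseudoHypDist_nonneg x y, tanhAdd_nonneg (norm_nonneg x) (norm_nonneg y)]

lemma pseudoHypDist_triangle {x y z : ℂ} (hx : x ∈ uDisc) (hy : y ∈ uDisc) (hz : z ∈ uDisc) :
    pseudoHypDist x z ≤ tanhAdd (pseudoHypDist x y) (pseudoHypDist y z) := by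
  rw [← pseudoHypDist_mobius hy hx hz, pseudoHypDist_comm y z, ← norm_mobius y x,
    ← norm_mobius y z]
  exact pseudoHypDist_le_tanhAdd_norm (mobius_mem hy hx) (mobius_mem hy hz)

lemma neg_mem_uDisc {z : ℂ} (hz : z ∈ uDisc) : -z ∈ uDisc := by
  rwa [mem_uDisc, norm_neg, ← mem_uDisc]

lemma pseudoHypDist_le_pseudoHypDist_of_mapsTo {f : ℂ → ℂ} (hf : DifferentiableOn ℂ f uDisc)
    (hfD : MapsTo f uDisc uDisc) {x y : ℂ} (hx : x ∈ uDisc) (hy : y ∈ uDisc) :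
    pseudoHypDist (f x) (f y) ≤ pseudoHypDist x y := by
  have hfx := hfD hx
  have hφ : DifferentiableOn ℂ (mobius (f x) ∘ f ∘ mobius (-x)) uDisc :=
    (differentiableOn_mobius hfx).comp (hf.comp (differentiableOn_mobius (neg_mem_uDisc hx))
      (mapsTo_mobius (neg_mem_uDisc hx))) (hfD.comp (mapsTo_mobius (neg_mem_uDisc hx)))
  have hφD : MapsTo (mobius (f x) ∘ f ∘ mobius (-x)) uDisc uDisc :=
    (mapsTo_mobius hfx).comp (hfD.comp (mapsTo_mobius (neg_mem_uDisc hx)))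
  have := Complex.norm_le_norm_of_mapsTo_ball hφ (hφD.mono_right ball_subset_closedBall)
    (by simp) (mem_uDisc.1 (mobius_mem hx hy))
  rw [Function.comp_apply, Function.comp_apply, mobius_neg_mobius hx hy, norm_mobius,
    norm_mobius] at this
  rwa [pseudoHypDist_comm, pseudoHypDist_comm x]

lemma pseudoHypDist_sq_sq (x y : ℂ) :
    pseudoHypDist (x ^ 2) (y ^ 2) = pseudoHypDist x y * pseudoHypDist x (-y) := by
  rw [pseudoHypDist, pseudoHypDist, pseudoHypDist, ← norm_mul, ← mul_div_mul_comm, map_pow]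
  congr 2 <;> ring

lemma exists_differentiableOn_exp_eq {c : ℂ} {R : ℝ} {h : ℂ → ℂ}
    (hd : DifferentiableOn ℂ h (ball c R)) (h0 : ∀ z ∈ ball c R, h z ≠ 0) :
    ∃ L : ℂ → ℂ, DifferentiableOn ℂ L (ball c R) ∧
      ∀ z ∈ ball c R, Complex.exp (L z) = h z := by
  obtain ⟨P, hP⟩ : Complex.IsExactOn (fun z => deriv h z / h z) (ball c R) :=
    ((hd.deriv isOpen_ball).div hd h0).isExactOn_ball
  have hk : ∀ z ∈ ball c R, HasDerivAt (fun z => h z * Complex.exp (-P z)) 0 z := by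
    intro z hz
    have hexp : HasDerivAt (fun y => Complex.exp (-P y))
        (Complex.exp (-P z) * -(deriv h z / h z)) z := (hP z hz).neg.cexp
    have hh : HasDerivAt h (deriv h z) z :=
      (hd.differentiableAt (isOpen_ball.mem_nhds hz)).hasDerivAt
    refine (hh.mul hexp).congr_deriv ?_
    rw [mul_neg, mul_neg, mul_left_comm, mul_div_cancel₀ _ (h0 z hz)]
    ring
  obtain ⟨a, ha⟩ := isOpen_ball.exists_is_const_of_deriv_eq_zero
    (convex_ball c R).isPreconnected
    (fun z hz => (hk z hz).differentiableAt.differentiableWithinAt) (fun z hz => (hk z hz).deriv)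
  refine ⟨fun z => P z + Complex.log a,
    fun z hz => ((hP z hz).differentiableAt.add_const _).differentiableWithinAt, fun z hz => ?_⟩
  have ha0 : a ≠ 0 := ha z hz ▸ mul_ne_zero (h0 z hz) (Complex.exp_ne_zero _)
  rw [Complex.exp_add, Complex.exp_log ha0, ← ha z hz, mul_left_comm, ← Complex.exp_add,
    add_neg_cancel, Complex.exp_zero, mul_one]

lemma exists_sq_eq_of_ne_zero {h : ℂ → ℂ} (hh : DifferentiableOn ℂ h uDisc)
    (hhD : MapsTo h uDisc uDisc) (h0 : ∀ z ∈ uDisc, h z ≠ 0) :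
    ∃ r : ℂ → ℂ, DifferentiableOn ℂ r uDisc ∧ MapsTo r uDisc uDisc ∧
      ∀ z ∈ uDisc, r z ^ 2 = h z := by
  obtain ⟨L, hL, hLh⟩ := exists_differentiableOn_exp_eq hh h0
  have hsq : ∀ z ∈ uDisc, Complex.exp (L z / 2) ^ 2 = h z := fun z hz => by
    rw [← Complex.exp_nat_mul, Nat.cast_ofNat, mul_div_cancel₀ _ two_ne_zero, hLh z hz]
  refine ⟨fun z => Complex.exp (L z / 2), (hL.div_const 2).cexp, fun z hz => ?_, hsq⟩
  have := mem_uDisc.1 (hhD hz)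
  rw [← hsq z hz, norm_pow, pow_lt_one_iff_of_nonneg (norm_nonneg _) two_ne_zero] at this
  exact mem_uDisc.2 this

lemma pseudoHypDist_le_mul_of_ne_zero {h : ℂ → ℂ} (hh : DifferentiableOn ℂ h uDisc)
    (hhD : MapsTo h uDisc uDisc) (h0 : ∀ z ∈ uDisc, h z ≠ 0) {a b : ℂ} (ha : a ∈ uDisc)
    (hb : b ∈ uDisc) {t ε : ℝ} (ht : t ≤ 1) (hha : ‖h a‖ ≤ t) (hε : ε ≤ 1)
    (hab : pseudoHypDist a b ≤ ε) :
    pseudoHypDist (h a) (h b) ≤ tanhAdd √t (tanhAdd ε √t) * pseudoHypDist a b := by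
  obtain ⟨r, hr, hrD, hrh⟩ := exists_sq_eq_of_ne_zero hh hhD h0
  have hs1 : √t ≤ 1 := Real.sqrt_le_one.2 ht
  have hε0 : 0 ≤ ε := (pseudoHypDist_nonneg a b).trans hab
  have hrr : pseudoHypDist (r a) (r b) ≤ pseudoHypDist a b :=
    pseudoHypDist_le_pseudoHypDist_of_mapsTo hr hrD ha hb
  have hra : ‖r a‖ ≤ √t := by
    have : ‖r a‖ ^ 2 ≤ t := by rwa [← norm_pow, hrh a ha]
    simpa using Real.abs_le_sqrt this
  have hrb : ‖r b‖ ≤ tanhAdd ε √t := by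
    calc ‖r b‖ = pseudoHypDist (r b) 0 := (pseudoHypDist_zero_right _).symm
      _ ≤ tanhAdd (pseudoHypDist (r b) (r a)) (pseudoHypDist (r a) 0) :=
        pseudoHypDist_triangle (hrD hb) (hrD ha) (mem_uDisc.2 (by simp))
      _ ≤ tanhAdd ε √t := by
        rw [pseudoHypDist_zero_right, pseudoHypDist_comm]
        exact tanhAdd_le_tanhAdd (pseudoHypDist_nonneg _ _) (hrr.trans hab) hε (norm_nonneg _)
          hra hs1
  have hneg : pseudoHypDist (r a) (-r b) ≤ tanhAdd √t (tanhAdd ε √t) := by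
    calc pseudoHypDist (r a) (-r b) ≤ tanhAdd ‖r a‖ ‖-r b‖ :=
          pseudoHypDist_le_tanhAdd_norm (hrD ha) (neg_mem_uDisc (hrD hb))
      _ ≤ tanhAdd √t (tanhAdd ε √t) := by
        rw [norm_neg]
        exact tanhAdd_le_tanhAdd (norm_nonneg _) hra hs1 (norm_nonneg _) hrb
          (tanhAdd_le_one hε0 hε (Real.sqrt_nonneg t) hs1)
  calc pseudoHypDist (h a) (h b)
        = pseudoHypDist (r a) (r b) * pseudoHypDist (r a) (-r b) := by
          rw [← hrh a ha, ← hrh b hb, pseudoHypDist_sq_sq]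
    _ ≤ pseudoHypDist a b * tanhAdd √t (tanhAdd ε √t) :=
        mul_le_mul hrr hneg (pseudoHypDist_nonneg _ _) (pseudoHypDist_nonneg _ _)
    _ = tanhAdd √t (tanhAdd ε √t) * pseudoHypDist a b := mul_comm _ _

lemma pseudoHypDist_le_mul_of_forall_ne {g : ℂ → ℂ} (hg : DifferentiableOn ℂ g uDisc)
    (hgD : MapsTo g uDisc uDisc) {q : ℂ} (hq : q ∈ uDisc) (hgq : ∀ z ∈ uDisc, g z ≠ q)
    {a b : ℂ} (ha : a ∈ uDisc) (hb : b ∈ uDisc) {t ε : ℝ} (ht : t ≤ 1)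
    (hqa : pseudoHypDist (g a) q ≤ t) (hε : ε ≤ 1) (hab : pseudoHypDist a b ≤ ε) :
    pseudoHypDist (g a) (g b) ≤ tanhAdd √t (tanhAdd ε √t) * pseudoHypDist a b := by
  rw [← pseudoHypDist_mobius hq (hgD ha) (hgD hb)]
  refine pseudoHypDist_le_mul_of_ne_zero (h := mobius q ∘ g)
    ((differentiableOn_mobius hq).comp hg hgD) ((mapsTo_mobius hq).comp hgD) (fun z hz => ?_)
    ha hb ht (by rwa [Function.comp_apply, norm_mobius]) hε hab
  rw [Function.comp_apply, mobius, div_ne_zero_iff]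
  exact ⟨sub_ne_zero.2 (hgq z hz), one_sub_conj_mul_ne_zero hq (hgD hz)⟩

lemma artanh_eq_real_artanh {x : ℝ} (hx : x ∈ Icc (-1) 1) : artanh x = Real.artanh x := by
  rw [artanh, Real.artanh_eq_half_log hx]
  ring

lemma pseudoHypDist_lt_tanh_of_pDist_lt {z w : ℂ} (hz : z ∈ uDisc) (hw : w ∈ uDisc) {C : ℝ}
    (h : pDist z w < C) : pseudoHypDist z w < Real.tanh C := by
  have hx : pseudoHypDist z w ∈ Ioo (-1) 1 :=
    ⟨by linarith [pseudoHypDist_nonneg z w], pseudoHypDist_lt_one hz hw⟩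
  rw [pDist_eq_artanh, artanh_eq_real_artanh (Ioo_subset_Icc_self hx), ← Real.artanh_tanh C,
    Real.artanh_lt_artanh_iff hx (Real.tanh_bijOn.mapsTo (mem_univ C))] at h
  exact h

lemma ofReal_le_blochRadiusD {U : Set ℂ} {z : ℂ} (hz : z ∈ uDisc) {C : ℝ}
    (hU : hBall z C ⊆ U) : ENNReal.ofReal C ≤ blochRadiusD U := by
  rcases le_or_gt C 0 with hC | hC
  · simp [ENNReal.ofReal_eq_zero.2 hC]
  · exact le_iSup₂_of_le (f := fun (r : ℝ≥0) (_ : ∃ z ∈ uDisc, hBall z r ⊆ U) => (r : ℝ≥0∞))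
      C.toNNReal ⟨z, hz, by rwa [Real.coe_toNNReal _ hC.le]⟩ le_rfl

lemma exists_notMem_pseudoHypDist_lt_tanh {U : Set ℂ} {C : ℝ}
    (hU : blochRadiusD U < ENNReal.ofReal C) {z : ℂ} (hz : z ∈ uDisc) :
    ∃ q ∈ uDisc, q ∉ U ∧ pseudoHypDist q z < Real.tanh C := by
  obtain ⟨q, ⟨hq, hqz⟩, hqU⟩ :=
    not_subset.1 fun hsub => (ofReal_le_blochRadiusD hz hsub).not_gt hU
  exact ⟨q, hq, hqU, pseudoHypDist_lt_tanh_of_pDist_lt hq hz hqz⟩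

lemma mapsTo_comps {α : Type*} {D : Set α} {f : ℕ → α → α} (hf : ∀ j, MapsTo (f j) D D) :
    ∀ n, MapsTo (comps f n) D D
  | 0 => hf 0
  | n + 1 => (hf (n + 1)).comp (mapsTo_comps hf n)

lemma IFSLimit.eq_of_tendsto_dist {X : Type*} [NormedAddCommGroup X] {D : Set X}
    {f : ℕ → X → X} {F : X → X} (hF : IFSLimit D f F) {z w : X} (hz : z ∈ D) (hw : w ∈ D)
    (h : Tendsto (fun n => dist (comps f n z) (comps f n w)) atTop (𝓝 0)) : F z = F w := by
  obtain ⟨s, hs, hlim⟩ := hF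
  exact dist_eq_zero.1 <|
    tendsto_nhds_unique ((hlim.tendsto_at hz).dist (hlim.tendsto_at hw)) (h.comp hs.tendsto_atTop)

lemma dist_le_two_mul_pseudoHypDist {z w : ℂ} (hz : z ∈ uDisc) (hw : w ∈ uDisc) :
    dist z w ≤ 2 * pseudoHypDist z w := by
  have hden : ‖1 - conj z * w‖ ≤ 2 := by
    rw [mem_uDisc] at hz hw
    calc ‖1 - conj z * w‖ ≤ 1 + ‖z‖ * ‖w‖ := by
          simpa [norm_mul] using norm_sub_le (1 : ℂ) (conj z * w)
      _ ≤ 2 := by nlinarith [norm_nonneg z, norm_nonneg w]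
  calc dist z w = pseudoHypDist z w * ‖1 - conj z * w‖ := by
        rw [pseudoHypDist, norm_div,
          div_mul_cancel₀ _ (norm_ne_zero_iff.2 (one_sub_conj_mul_ne_zero hz hw)), dist_eq_norm]
    _ ≤ pseudoHypDist z w * 2 := mul_le_mul_of_nonneg_left hden (pseudoHypDist_nonneg z w)
    _ = 2 * pseudoHypDist z w := mul_comm _ _

section Contracting

variable {f : ℕ → ℂ → ℂ} {ε κ : ℝ}

lemma pseudoHypDist_comps_le (hfD : ∀ j, MapsTo (f j) uDisc uDisc) (hκ0 : 0 ≤ κ) (hκ1 : κ ≤ 1)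
    (hf : ∀ j, ∀ a ∈ uDisc, ∀ b ∈ uDisc, pseudoHypDist a b ≤ ε →
      pseudoHypDist (f j a) (f j b) ≤ κ * pseudoHypDist a b)
    {z w : ℂ} (hz : z ∈ uDisc) (hw : w ∈ uDisc) (hzw : pseudoHypDist z w ≤ ε) :
    ∀ n, pseudoHypDist (comps f n z) (comps f n w) ≤ κ ^ (n + 1) * pseudoHypDist z w
  | 0 => by simpa [comps] using hf 0 z hz w hw hzw
  | n + 1 => by
    have ih := pseudoHypDist_comps_le hfD hκ0 hκ1 hf hz hw hzw n
    have hn : pseudoHypDist (comps f n z) (comps f n w) ≤ ε :=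
      ih.trans ((mul_le_of_le_one_left (pseudoHypDist_nonneg z w)
        (pow_le_one₀ hκ0 hκ1)).trans hzw)
    calc pseudoHypDist (comps f (n + 1) z) (comps f (n + 1) w)
        ≤ κ * pseudoHypDist (comps f n z) (comps f n w) :=
          hf (n + 1) _ (mapsTo_comps hfD n hz) _ (mapsTo_comps hfD n hw) hn
      _ ≤ κ * (κ ^ (n + 1) * pseudoHypDist z w) := mul_le_mul_of_nonneg_left ih hκ0
      _ = κ ^ (n + 1 + 1) * pseudoHypDist z w := by ring

lemma tendsto_dist_comps_of_contracting (hfD : ∀ j, MapsTo (f j) uDisc uDisc) (hκ0 : 0 ≤ κ)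
    (hκ1 : κ < 1)
    (hf : ∀ j, ∀ a ∈ uDisc, ∀ b ∈ uDisc, pseudoHypDist a b ≤ ε →
      pseudoHypDist (f j a) (f j b) ≤ κ * pseudoHypDist a b)
    {z w : ℂ} (hz : z ∈ uDisc) (hw : w ∈ uDisc) (hzw : pseudoHypDist z w ≤ ε) :
    Tendsto (fun n => dist (comps f n z) (comps f n w)) atTop (𝓝 0) := by
  have hlim : Tendsto (fun n => 2 * (κ ^ (n + 1) * pseudoHypDist z w)) atTop (𝓝 0) := by
    simpa using (((tendsto_pow_atTop_nhds_zero_of_lt_one hκ0 hκ1).comp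
      (tendsto_add_atTop_nat 1)).mul_const (pseudoHypDist z w)).const_mul 2
  refine squeeze_zero (fun n => dist_nonneg) (fun n => ?_) hlim
  exact (dist_le_two_mul_pseudoHypDist (mapsTo_comps hfD n hz) (mapsTo_comps hfD n hw)).trans
    (mul_le_mul_of_nonneg_left (pseudoHypDist_comps_le hfD hκ0 hκ1.le hf hz hw hzw n) two_pos.le)

end Contracting

theorem stmt1_general (W : ℕ → Set ℂ)
    (hW : ∀ j, IsOpen (W j) ∧ IsConnected (W j) ∧ W j ⊆ uDisc)
    (C : ℝ)
    (hWC : ∀ j, blochRadiusD (W j) < ENNReal.ofReal C)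
    (g : ℕ → ℂ → ℂ)
    (hg : ∀ j, DifferentiableOn ℂ (g j) uDisc ∧ MapsTo (g j) uDisc (W j))
    (F : ℂ → ℂ) (hF : IFSLimit uDisc g F) :
    ∃ c : ℂ, ∀ z ∈ uDisc, F z = c := by
  have hgD : ∀ j, MapsTo (g j) uDisc uDisc := fun j => (hg j).2.mono_right (hW j).2.2
  have h0 : (0 : ℂ) ∈ uDisc := mem_uDisc.2 (by simp)
  refine ⟨F 0, fun z hz => hF.eq_of_tendsto_dist hz h0 ?_⟩
  set s := √(Real.tanh C)
  set ε := pseudoHypDist z 0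
  have hs0 : 0 ≤ s := Real.sqrt_nonneg _
  have hs1 : s < 1 := (Real.sqrt_lt' one_pos).2 (by simpa using Real.tanh_lt_one C)
  have hε0 : 0 ≤ ε := pseudoHypDist_nonneg z 0
  have hε1 : ε < 1 := pseudoHypDist_lt_one hz h0
  refine tendsto_dist_comps_of_contracting hgD (tanhAdd_nonneg hs0 (tanhAdd_nonneg hε0 hs0))
    (tanhAdd_lt_one hs0 hs1 (tanhAdd_nonneg hε0 hs0) (tanhAdd_lt_one hε0 hε1 hs0 hs1))
    (fun j a ha b hb hab => ?_) hz h0 le_rfl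
  obtain ⟨q, hq, hqW, hqa⟩ := exists_notMem_pseudoHypDist_lt_tanh (hWC j) (hgD j ha)
  exact pseudoHypDist_le_mul_of_forall_ne (hg j).1 (hgD j) hq
    (fun x hx hxq => hqW (hxq ▸ (hg j).2 hx)) ha hb (Real.tanh_lt_one C).le
    (by rw [pseudoHypDist_comm]; exact hqa.le) hε1.le hab

/-- uniformly Bloch targets force all IFS limits to be constant. -/
theorem stmt1 (W : ℕ → Set ℂ)
    (hW : ∀ j, IsOpen (W j) ∧ IsConnected (W j) ∧ W j ⊆ uDisc)
    (C : ℝ) (hC : 0 < C)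
    (hWC : ∀ j, blochRadiusD (W j) < ENNReal.ofReal C)
    (g : ℕ → ℂ → ℂ)
    (hg : ∀ j, DifferentiableOn ℂ (g j) uDisc ∧ MapsTo (g j) uDisc (W j))
    (F : ℂ → ℂ) (hF : IFSLimit uDisc g F) :
    ∃ c : ℂ, ∀ z ∈ uDisc, F z = c :=
  stmt1_general W hW C hWC g hg F hF
end
end

section
/- Let D ⊂ ℂⁿ be a bounded convex domain and let {φ_j : 𝔻 → D} be a sequence of complex geodesics converging in the compact-open topology to a map φ : 𝔻 → closure(D). If there exists ζ₀ ∈ 𝔻 with φ(ζ₀) ∈ D, then φ(𝔻) ⊆ D and φ is a complex geodesic of D. -/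
open Metric Set Filter
open scoped ENNReal NNReal

noncomputable section

variable {E : Type*} [NormedAddCommGroup E] [NormedSpace ℂ E]

/-! A limit of complex geodesics meeting `D` cannot touch `∂D`: otherwise a real linear form
separating `D` from a boundary value of `φ` would give a holomorphic function `exp (L ∘ φ)`
whose modulus attains an interior maximum without being constant. Once `φ` maps into `D`,
the isometry identity passes to the limit because the Kobayashi distance is continuous on
`D × D`: near a point of the open set `D` it is dominated by the hyperbolic length of an
affine disc. -/

open Topology

lemma artanh_zero : artanh 0 = 0 := by
  simp [artanh]

lemma artanh_nonneg {x : ℝ} (h0 : 0 ≤ x) (h1 : x < 1) : 0 ≤ artanh x := by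
  have : 1 ≤ (1 + x) / (1 - x) := by
    rw [le_div_iff₀ (by linarith)]
    linarith
  exact div_nonneg (Real.log_nonneg this) zero_le_two

lemma continuousAt_artanh_zero : ContinuousAt artanh 0 := by
  unfold artanh
  refine ContinuousAt.div_const (ContinuousAt.log ?_ (by norm_num)) 2
  exact (continuousAt_const.add continuousAt_id).div (continuousAt_const.sub continuousAt_id)
    (by norm_num)

lemma pDist_zero_left (ζ : ℂ) : pDist 0 ζ = artanh ‖ζ‖ := by
  simp [pDist]

lemma pDist_zero_left_nonneg {ζ : ℂ} (hζ : ζ ∈ uDisc) : 0 ≤ pDist 0 ζ := by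
  rw [pDist_zero_left]
  exact artanh_nonneg (norm_nonneg ζ) (mem_ball_zero_iff.1 hζ)

lemma lemSet_nonneg {D : Set E} {z w : E} {c : ℝ} (hc : c ∈ lemSet D z w) : 0 ≤ c := by
  obtain ⟨f, ζ, -, -, -, hζ, -, rfl⟩ := hc
  exact pDist_zero_left_nonneg hζ

lemma sInf_lemSet_nonneg (D : Set E) (z w : E) : 0 ≤ sInf (lemSet D z w) :=
  Real.sInf_nonneg fun _ => lemSet_nonneg

def kChainLengths (D : Set E) (z w : E) : Set ℝ :=
  {s | ∃ (m : ℕ) (p : ℕ → E), p 0 = z ∧ p m = w ∧ (∀ i, i ≤ m → p i ∈ D) ∧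
      s = ∑ i ∈ Finset.range m, sInf (lemSet D (p i) (p (i + 1)))}

lemma kDist_eq_sInf_kChainLengths (D : Set E) (z w : E) :
    kDist D z w = sInf (kChainLengths D z w) := rfl

lemma kChainLengths_nonneg {D : Set E} {z w : E} {s : ℝ} (hs : s ∈ kChainLengths D z w) :
    0 ≤ s := by
  obtain ⟨m, p, -, -, -, rfl⟩ := hs
  exact Finset.sum_nonneg fun i _ => sInf_lemSet_nonneg D _ _

lemma bddBelow_kChainLengths (D : Set E) (z w : E) : BddBelow (kChainLengths D z w) :=
  ⟨0, fun _ hs => kChainLengths_nonneg hs⟩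

lemma kDist_nonneg (D : Set E) (z w : E) : 0 ≤ kDist D z w :=
  Real.sInf_nonneg fun _ hs => kChainLengths_nonneg hs

lemma sInf_lemSet_mem_kChainLengths {D : Set E} {z w : E} (hz : z ∈ D) (hw : w ∈ D) :
    sInf (lemSet D z w) ∈ kChainLengths D z w := by
  refine ⟨1, fun i => if i = 0 then z else w, by simp, by simp, fun i _ => ?_, by simp⟩
  dsimp only
  split_ifs
  exacts [hz, hw]

lemma kDist_le_sInf_lemSet {D : Set E} {z w : E} (hz : z ∈ D) (hw : w ∈ D) :
    kDist D z w ≤ sInf (lemSet D z w) :=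
  csInf_le (bddBelow_kChainLengths D z w) (sInf_lemSet_mem_kChainLengths hz hw)

lemma add_mem_kChainLengths {D : Set E} {a b c : E} {s t : ℝ}
    (hs : s ∈ kChainLengths D a b) (ht : t ∈ kChainLengths D b c) :
    s + t ∈ kChainLengths D a c := by
  obtain ⟨m₁, p₁, hp₁0, hp₁m, hp₁D, rfl⟩ := hs
  obtain ⟨m₂, p₂, hp₂0, hp₂m, hp₂D, rfl⟩ := ht
  set p : ℕ → E := fun i => if i ≤ m₁ then p₁ i else p₂ (i - m₁)
  have hp_shift : ∀ i, p (m₁ + i) = p₂ i := by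
    rintro (_ | i)
    · simp [p, hp₁m, hp₂0]
    · simp [p]
  refine ⟨m₁ + m₂, p, by simp [p, hp₁0], by rw [hp_shift, hp₂m], fun i hi => ?_, ?_⟩
  · by_cases h : i ≤ m₁
    · simpa [p, h] using hp₁D i h
    · simpa [p, h] using hp₂D (i - m₁) (by omega)
  · rw [Finset.sum_range_add]
    congr 1
    · refine Finset.sum_congr rfl fun i hi => ?_
      have hi : i + 1 ≤ m₁ := Finset.mem_range.1 hi
      simp [p, hi, hi.trans' i.le_succ]
    · simp only [add_assoc, hp_shift]

lemma kDist_triangle {D : Set E} {a b c : E} (ha : a ∈ D) (hb : b ∈ D) (hc : c ∈ D) :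
    kDist D a c ≤ kDist D a b + kDist D b c := by
  simp only [kDist_eq_sInf_kChainLengths]
  have hab := sInf_lemSet_mem_kChainLengths ha hb
  have hbc := sInf_lemSet_mem_kChainLengths hb hc
  rw [← csInf_add ⟨_, hab⟩ (bddBelow_kChainLengths D a b) ⟨_, hbc⟩
    (bddBelow_kChainLengths D b c)]
  exact csInf_le_csInf (bddBelow_kChainLengths D a c) ⟨_, Set.add_mem_add hab hbc⟩
    (Set.add_subset_iff.2 fun s hs t ht => add_mem_kChainLengths hs ht)

/-- The affine disc `λ ↦ a + λ (r / ‖b - a‖) (b - a)` lies in `ball a r` and reaches `b` at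
`λ = ‖b - a‖ / r`. -/
lemma artanh_dist_div_mem_lemSet {D : Set E} {a b : E} {r : ℝ} (hball : ball a r ⊆ D)
    (hab : dist a b < r) : artanh (dist a b / r) ∈ lemSet D a b := by
  set d := dist a b
  have hr : 0 < r := dist_nonneg.trans_lt hab
  have hd : ‖b - a‖ = d := by rw [← dist_eq_norm, dist_comm]
  set f : ℂ → E := fun lam => a + (lam * ((r / d : ℝ) : ℂ)) • (b - a)
  have hx : ‖((d / r : ℝ) : ℂ)‖ = d / r := by
    rw [Complex.norm_real, Real.norm_of_nonneg (div_nonneg dist_nonneg hr.le)]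
  refine ⟨f, ((d / r : ℝ) : ℂ), fun z _ => by fun_prop, fun lam hlam => hball ?_, by simp [f],
    ?_, ?_, by rw [pDist_zero_left, hx]⟩
  · have hlam : ‖lam‖ < 1 := mem_ball_zero_iff.1 hlam
    rw [mem_ball, dist_eq_norm, add_sub_cancel_left, norm_smul, norm_mul, Complex.norm_real,
      Real.norm_of_nonneg (div_nonneg hr.le dist_nonneg), hd]
    rcases eq_or_ne d 0 with h0 | h0
    · simpa [h0] using hr
    · calc ‖lam‖ * (r / d) * d = ‖lam‖ * r := by field_simp
        _ < r := by nlinarith [norm_nonneg lam]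
  · rw [uDisc, mem_ball_zero_iff, hx, div_lt_one hr]
    exact hab
  · rcases eq_or_ne d 0 with h0 | h0
    · simp [f, (dist_eq_zero.1 h0).symm]
    · have : (d / r) * (r / d) = 1 := by field_simp
      simp only [f, ← Complex.ofReal_mul, this, Complex.ofReal_one, one_smul, add_sub_cancel]

lemma kDist_le_artanh_of_ball_subset {D : Set E} {a b : E} {r : ℝ} (hball : ball a r ⊆ D)
    (hab : dist a b < r) : kDist D a b ≤ artanh (dist a b / r) := by
  have hr : 0 < r := dist_nonneg.trans_lt hab
  calc kDist D a b
      ≤ sInf (lemSet D a b) :=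
        kDist_le_sInf_lemSet (hball (mem_ball_self hr)) (hball (mem_ball'.2 hab))
    _ ≤ artanh (dist a b / r) :=
        csInf_le ⟨0, fun _ => lemSet_nonneg⟩ (artanh_dist_div_mem_lemSet hball hab)

lemma tendsto_kDist_nhds_diag {D : Set E} (hD : IsOpen D) {a : E} (ha : a ∈ D) :
    Tendsto (fun p : E × E => kDist D p.1 p.2) (𝓝 (a, a)) (𝓝 0) := by
  obtain ⟨r, hr, hball⟩ := Metric.isOpen_iff.1 hD a ha
  have hdist : Tendsto (fun p : E × E => artanh (dist p.1 p.2 / (r / 2))) (𝓝 (a, a)) (𝓝 0) := by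
    have h : Tendsto (fun p : E × E => dist p.1 p.2 / (r / 2)) (𝓝 (a, a)) (𝓝 0) := by
      simpa using (continuous_dist.tendsto (a, a)).div_const (r / 2)
    have := continuousAt_artanh_zero.tendsto.comp h
    rwa [artanh_zero] at this
  refine tendsto_of_tendsto_of_tendsto_of_le_of_le' tendsto_const_nhds hdist
    (Eventually.of_forall fun p => kDist_nonneg D p.1 p.2) ?_
  filter_upwards [prod_mem_nhds (ball_mem_nhds a (by positivity : 0 < r / 4))
    (ball_mem_nhds a (by positivity : 0 < r / 4))] with p hp
  obtain ⟨h1, h2⟩ := mem_prod.1 hp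
  rw [mem_ball] at h1 h2
  refine kDist_le_artanh_of_ball_subset (fun w hw => hball ?_) ?_
  · rw [mem_ball] at hw ⊢
    linarith [dist_triangle w p.1 a]
  · linarith [dist_triangle_right p.1 p.2 a]

lemma continuousAt_kDist {D : Set E} (hD : IsOpen D) {x y : E} (hx : x ∈ D) (hy : y ∈ D) :
    ContinuousAt (fun p : E × E => kDist D p.1 p.2) (x, y) := by
  set bound : E × E → ℝ := fun p =>
    kDist D x p.1 + kDist D p.1 x + kDist D y p.2 + kDist D p.2 y
  have hbound : Tendsto bound (𝓝 (x, y)) (𝓝 0) := by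
    have hx' := tendsto_kDist_nhds_diag hD hx
    have hy' := tendsto_kDist_nhds_diag hD hy
    have h1 : Tendsto (fun p : E × E => (x, p.1)) (𝓝 (x, y)) (𝓝 (x, x)) :=
      tendsto_const_nhds.prodMk_nhds (continuous_fst.tendsto _)
    have h2 : Tendsto (fun p : E × E => (p.1, x)) (𝓝 (x, y)) (𝓝 (x, x)) :=
      (continuous_fst.tendsto _).prodMk_nhds tendsto_const_nhds
    have h3 : Tendsto (fun p : E × E => (y, p.2)) (𝓝 (x, y)) (𝓝 (y, y)) :=
      tendsto_const_nhds.prodMk_nhds (continuous_snd.tendsto _)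
    have h4 : Tendsto (fun p : E × E => (p.2, y)) (𝓝 (x, y)) (𝓝 (y, y)) :=
      (continuous_snd.tendsto _).prodMk_nhds tendsto_const_nhds
    simpa using (((hx'.comp h1).add (hx'.comp h2)).add (hy'.comp h3)).add (hy'.comp h4)
  rw [ContinuousAt, tendsto_iff_dist_tendsto_zero]
  refine squeeze_zero' (Eventually.of_forall fun _ => dist_nonneg) ?_ hbound
  filter_upwards [prod_mem_nhds (hD.mem_nhds hx) (hD.mem_nhds hy)] with p hp
  obtain ⟨hp1, hp2⟩ := mem_prod.1 hp
  rw [Real.dist_eq, abs_sub_le_iff]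
  simp only [bound]
  constructor
  · linarith [kDist_triangle hp1 hx hp2, kDist_triangle hx hy hp2, kDist_nonneg D x p.1,
      kDist_nonneg D p.2 y]
  · linarith [kDist_triangle hx hp1 hy, kDist_triangle hp1 hp2 hy, kDist_nonneg D p.1 x,
      kDist_nonneg D y p.2]

lemma re_eq_of_isPreconnected_of_isMaxOn_re {f : ℂ → ℂ} {U : Set ℂ} {c : ℂ} (hU : IsPreconnected U)
    (ho : IsOpen U) (hf : DifferentiableOn ℂ f U) (hc : c ∈ U)
    (hmax : IsMaxOn (fun z => (f z).re) U c) : ∀ z ∈ U, (f z).re = (f c).re := by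
  have hexp : IsMaxOn (norm ∘ fun z => Complex.exp (f z)) U c := fun z hz => by
    simpa [Complex.norm_exp] using hmax hz
  intro z hz
  have h := congrArg norm (Complex.eqOn_of_isPreconnected_of_isMaxOn_norm hU ho hf.cexp hc hexp hz)
  simpa [Complex.norm_exp] using h

lemma DifferentiableOn.mapsTo_of_mapsTo_closure {D : Set E} (hDo : IsOpen D)
    (hDconv : Convex ℝ D) {U : Set ℂ} (hU : IsPreconnected U) (ho : IsOpen U) {f : ℂ → E}
    (hf : DifferentiableOn ℂ f U) (hcl : MapsTo f U (closure D)) {ζ₀ : ℂ} (hζ₀ : ζ₀ ∈ U)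
    (hfζ₀ : f ζ₀ ∈ D) : MapsTo f U D := by
  intro ζ hζ
  by_contra hnot
  obtain ⟨L, hL⟩ := RCLike.geometric_hahn_banach_open_point (𝕜 := ℂ) hDconv hDo hnot
  have hle : ∀ w ∈ closure D, (L w).re ≤ (L (f ζ)).re :=
    fun w hw => closure_minimal (fun a ha => (hL a ha).le)
      (isClosed_le (Complex.continuous_re.comp L.continuous) continuous_const) hw
  have hmax : IsMaxOn (fun z => (L (f z)).re) U ζ := fun z hz => hle _ (hcl hz)
  have heq := re_eq_of_isPreconnected_of_isMaxOn_re hU ho (L.differentiable.comp_differentiableOn hf) hζ hmax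
  exact (hL _ hfζ₀).ne (heq ζ₀ hζ₀)

theorem stmt8_general {n : ℕ} (D : Set (EuclideanSpace ℂ (Fin n)))
    (hDo : IsOpen D) (hDconv : Convex ℝ D)
    (φseq : ℕ → ℂ → EuclideanSpace ℂ (Fin n))
    (hgeo : ∀ j, IsComplexGeodesic D (φseq j))
    (φ : ℂ → EuclideanSpace ℂ (Fin n))
    (hconv : TendstoLocallyUniformlyOn φseq φ atTop uDisc)
    (hcl : MapsTo φ uDisc (closure D))
    (ζ₀ : ℂ) (hζ₀ : ζ₀ ∈ uDisc) (hφζ₀ : φ ζ₀ ∈ D) :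
    MapsTo φ uDisc D ∧ IsComplexGeodesic D φ := by
  have hφ : DifferentiableOn ℂ φ uDisc :=
    hconv.differentiableOn (Eventually.of_forall fun j => (hgeo j).1) isOpen_ball
  have hmaps : MapsTo φ uDisc D := hφ.mapsTo_of_mapsTo_closure hDo hDconv
    (convex_ball (0 : ℂ) 1).isPreconnected isOpen_ball hcl hζ₀ hφζ₀
  refine ⟨hmaps, hφ, hmaps, fun ζ hζ η hη => ?_⟩
  have hlim := (continuousAt_kDist hDo (hmaps hζ) (hmaps hη)).tendsto.comp
    ((hconv.tendsto_at hζ).prodMk_nhds (hconv.tendsto_at hη))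
  have hgeo_ζη : ∀ j, kDist D (φseq j ζ) (φseq j η) = pDist ζ η :=
    fun j => (hgeo j).2.2 ζ hζ η hη
  simp only [Function.comp_def, hgeo_ζη] at hlim
  exact tendsto_nhds_unique hlim tendsto_const_nhds

/-- a limit of complex geodesics which meets `D` is a complex
geodesic of `D`. -/
theorem stmt8 {n : ℕ} (D : Set (EuclideanSpace ℂ (Fin n)))
    (hDo : IsOpen D) (hDb : Bornology.IsBounded D) (hDconv : Convex ℝ D)
    (φseq : ℕ → ℂ → EuclideanSpace ℂ (Fin n))
    (hgeo : ∀ j, IsComplexGeodesic D (φseq j))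
    (φ : ℂ → EuclideanSpace ℂ (Fin n))
    (hconv : TendstoLocallyUniformlyOn φseq φ atTop uDisc)
    (hcl : MapsTo φ uDisc (closure D))
    (ζ₀ : ℂ) (hζ₀ : ζ₀ ∈ uDisc) (hφζ₀ : φ ζ₀ ∈ D) :
    MapsTo φ uDisc D ∧ IsComplexGeodesic D φ :=
  stmt8_general D hDo hDconv φseq hgeo φ hconv hcl ζ₀ hζ₀ hφζ₀
end
end

section
/- In the unit ball 𝔹ⁿ ⊂ ℂⁿ (n ≥ 2), let X' ⊂ 𝔻 be a subset of the unit disc which is not degenerate in 𝔻, and set X := X' × {0} ⊂ 𝔹ⁿ. Then X is a Bloch subset of 𝔹ⁿ (it contains no Kobayashi balls, so R(X) = 0), but X is not degenerate in 𝔹ⁿ. -/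
open Metric Set Filter
open scoped ENNReal NNReal

noncomputable section

variable {E : Type*} [NormedAddCommGroup E] [NormedSpace ℂ E]

/-!
Kobayashi balls of positive radius in an open set are neighbourhoods of their centre, since
short straight discs have small Poincaré length; the slice lies in the hyperplane `z 1 = 0`, so it
has empty interior and contains no such ball. Conversely, the first coordinate projection and
the inclusion of `𝔻` as the first axis form a holomorphic retraction of `𝔹ⁿ` onto a disc;
conjugating an iterated function system on `𝔻` with values in `X'` by it gives one on `𝔹ⁿ` with
values in the slice, whose limit is non-constant as soon as the original one is.
-/

open Topology

section Kobayashi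

variable {E : Type*} [NormedAddCommGroup E] [NormedSpace ℂ E] {D : Set E}

lemma nonneg_of_mem_lemSet {z w : E} {c : ℝ} (hc : c ∈ lemSet D z w) : 0 ≤ c := by
  obtain ⟨f, ζ, -, -, -, hζ, -, rfl⟩ := hc
  rw [pDist_zero_left]
  exact artanh_nonneg (norm_nonneg ζ) (mem_ball_zero_iff.1 hζ)

/-- A single analytic disc is a chain of length one. -/
lemma kDist_le_pDist_of_disc {f : ℂ → E} {ζ : ℂ} (hf : DifferentiableOn ℂ f uDisc)
    (hfD : MapsTo f uDisc D) (hζ : ζ ∈ uDisc) : kDist D (f 0) (f ζ) ≤ pDist 0 ζ := by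
  unfold kDist
  refine le_trans (csInf_le ?_ ?_) (csInf_le ⟨0, fun _ => nonneg_of_mem_lemSet⟩
    ⟨f, ζ, hf, hfD, rfl, hζ, rfl, rfl⟩)
  · refine ⟨0, ?_⟩
    rintro s ⟨m, p, -, -, -, rfl⟩
    exact Finset.sum_nonneg fun i _ => Real.sInf_nonneg fun _ => nonneg_of_mem_lemSet
  · refine ⟨1, fun i => if i = 0 then f 0 else f ζ, rfl, rfl, fun i _ => ?_, by simp⟩
    dsimp only
    split_ifs
    exacts [hfD (mem_ball_self one_pos), hfD hζ]

/-- The straight disc `ζ ↦ w + (R ζ / ‖z - w‖) • (z - w)` reaches `z` at `ζ = ‖z - w‖ / R`; for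
`z = w` the junk value `R / 0 = 0` makes it the constant disc. -/
lemma kDist_le_artanh_of_ball_subset_s14 {w z : E} {R : ℝ} (hR : 0 < R) (hball : ball w R ⊆ D)
    (hz : z ∈ ball w R) : kDist D w z ≤ artanh (dist z w / R) := by
  set f : ℂ → E := fun ζ => w + (ζ * (R / ‖z - w‖ : ℝ)) • (z - w)
  set ζ₀ : ℂ := ((dist z w / R : ℝ) : ℂ)
  have hf : DifferentiableOn ℂ f uDisc := by fun_prop
  have hfD : MapsTo f uDisc D := by
    intro ζ hζ
    apply hball
    rw [mem_ball_iff_norm, add_sub_cancel_left, norm_smul, norm_mul, Complex.norm_real,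
      Real.norm_of_nonneg (by positivity), mul_assoc]
    rcases eq_or_ne ‖z - w‖ 0 with h | h
    · simpa [h] using hR
    · rw [div_mul_cancel₀ _ h]
      exact (mul_lt_iff_lt_one_left hR).2 (mem_ball_zero_iff.1 hζ)
  have hζ₀ : ζ₀ ∈ uDisc := by
    rw [uDisc, mem_ball_zero_iff, Complex.norm_real, Real.norm_of_nonneg (by positivity)]
    exact (div_lt_one hR).2 hz
  have hfζ₀ : f ζ₀ = z := by
    by_cases hzw : z = w
    · simp [f, hzw]
    · have : ‖z - w‖ ≠ 0 := norm_ne_zero_iff.2 (sub_ne_zero.2 hzw)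
      simp only [f, ζ₀, ← Complex.ofReal_mul, dist_eq_norm]
      rw [div_mul_div_cancel₀ hR.ne', div_self this, Complex.ofReal_one, one_smul,
        add_sub_cancel]
  have h := kDist_le_pDist_of_disc hf hfD hζ₀
  rwa [show f 0 = w by simp [f], hfζ₀, pDist_zero_left, Complex.norm_real,
    Real.norm_of_nonneg (by positivity)] at h

lemma kBall_mem_nhds (hD : IsOpen D) {z : E} (hz : z ∈ D) {r : ℝ} (hr : 0 < r) :
    kBall D z r ∈ 𝓝 z := by
  obtain ⟨ε, hε, hεD⟩ := Metric.isOpen_iff.1 hD z hz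
  have hartanh : Tendsto (fun w => artanh (dist z w / (ε / 2))) (𝓝 z) (𝓝 0) := by
    have : Tendsto (fun w => dist z w / (ε / 2)) (𝓝 z) (𝓝 0) := by
      simpa using ((tendsto_const_nhds (x := z)).dist (tendsto_id (x := 𝓝 z))).div_const (ε / 2)
    simpa [artanh_zero, Function.comp_def] using continuousAt_artanh_zero.tendsto.comp this
  filter_upwards [hD.mem_nhds hz, ball_mem_nhds z (half_pos hε),
    hartanh.eventually (gt_mem_nhds hr)] with w hwD hwz hwr
  refine ⟨hwD, (kDist_le_artanh_of_ball_subset_s14 (half_pos hε) ?_ ?_).trans_lt hwr⟩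
  · exact (ball_subset_ball' (by rw [mem_ball] at hwz; linarith)).trans hεD
  · rwa [mem_ball_comm]

lemma blochRadius_eq_zero_of_interior_eq_empty (hD : IsOpen D) {X : Set E}
    (hX : interior X = ∅) : blochRadius D X = 0 := by
  simp only [blochRadius, ENNReal.iSup_eq_zero, ENNReal.coe_eq_zero]
  rintro r ⟨z, hz, hsub⟩
  by_contra hr
  have : z ∈ interior X :=
    mem_interior_iff_mem_nhds.2 (mem_of_superset (kBall_mem_nhds hD hz (by positivity)) hsub)
  simp [hX] at this

end Kobayashi

section Degenerate

lemma comps_conj {E F : Type*} {ι : F → E} {π : E → F} (hπι : ∀ x, π (ι x) = x)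
    (g : ℕ → F → F) (j : ℕ) :
    comps (fun j => ι ∘ g j ∘ π) j = ι ∘ comps g j ∘ π := by
  induction j with
  | zero => rfl
  | succ j ih =>
    funext z
    simp only [comps, ih, Function.comp_apply, hπι]

variable {E F : Type*} [NormedAddCommGroup E] [NormedSpace ℂ E]
  [NormedAddCommGroup F] [NormedSpace ℂ F]

lemma IFSLimit.conj {D : Set E} {D' : Set F} {g : ℕ → F → F} {G : F → F} (ι : F →L[ℂ] E)
    {π : E →L[ℂ] F} (hπι : ∀ x, π (ι x) = x) (hπD : MapsTo π D D') (h : IFSLimit D' g G) :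
    IFSLimit D (fun j => ι ∘ g j ∘ π) (ι ∘ G ∘ π) := by
  obtain ⟨s, hs, hlim⟩ := h
  refine ⟨s, hs, ?_⟩
  simp only [comps_conj hπι]
  exact ι.uniformContinuous.comp_tendstoLocallyUniformlyOn
    (hlim.comp π hπD π.continuous.continuousOn)

lemma Degenerate.of_retract {D X : Set E} {D' X' : Set F} (ι : F →L[ℂ] E) (π : E →L[ℂ] F)
    (hπι : ∀ x, π (ι x) = x) (hπD : MapsTo π D D') (hιD : MapsTo ι D' D) (hιX : MapsTo ι X' X)
    (h : Degenerate D X) : Degenerate D' X' := by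
  intro g hg G hG
  have hlift : ∀ j, DifferentiableOn ℂ (ι ∘ g j ∘ π) D ∧ MapsTo (ι ∘ g j ∘ π) D X := fun j =>
    ⟨ι.differentiable.comp_differentiableOn ((hg j).1.comp π.differentiableOn hπD),
      hιX.comp ((hg j).2.comp hπD)⟩
  obtain ⟨c, hc⟩ := h _ hlift _ (hG.conj ι hπι hπD)
  refine ⟨π c, fun x hx => ?_⟩
  rw [← hc _ (hιD hx)]
  simp [hπι]

end Degenerate

section Ball

variable {n : ℕ}

lemma interior_setOf_apply_eq_zero (i : Fin n) :
    interior {z : EuclideanSpace ℂ (Fin n) | z i = 0} = ∅ := by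
  by_contra hne
  have htop := (LinearMap.ker (EuclideanSpace.proj (𝕜 := ℂ) i).toLinearMap
    ).eq_top_of_nonempty_interior' (nonempty_iff_ne_empty.2 hne)
  have : EuclideanSpace.single i (1 : ℂ) ∈
      LinearMap.ker (EuclideanSpace.proj (𝕜 := ℂ) i).toLinearMap :=
    htop ▸ Submodule.mem_top
  simp at this

lemma not_degenerate_axis_slice (i : Fin n) {X' : Set ℂ} (hX' : X' ⊆ uDisc)
    (hnd : ¬ Degenerate uDisc X') :
    ¬ Degenerate (ball (0 : EuclideanSpace ℂ (Fin n)) 1)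
      {z ∈ ball (0 : EuclideanSpace ℂ (Fin n)) 1 | z i ∈ X' ∧ ∀ j, j ≠ i → z j = 0} := by
  set ι : ℂ →L[ℂ] EuclideanSpace ℂ (Fin n) :=
    (ContinuousLinearMap.id ℂ ℂ).smulRight (EuclideanSpace.single i 1)
  have hι : ∀ ζ, ι ζ = EuclideanSpace.single i ζ := fun ζ => by
    ext j; by_cases hj : j = i <;> simp [ι, hj]
  have hιD : MapsTo ι uDisc (ball 0 1) := fun ζ hζ => by
    simpa [hι, uDisc] using hζ
  have hπD : MapsTo (EuclideanSpace.proj i) (ball 0 1) uDisc := fun z hz => by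
    simpa [uDisc] using (PiLp.norm_apply_le z i).trans_lt (mem_ball_zero_iff.1 hz)
  have hιX : MapsTo ι X' {z ∈ ball 0 1 | z i ∈ X' ∧ ∀ j, j ≠ i → z j = 0} := fun ζ hζ =>
    ⟨hιD (hX' hζ), by simpa [hι] using hζ, fun j hj => by simp [hι, hj]⟩
  exact fun h => hnd (h.of_retract ι _ (fun ζ => by simp [hι]) hπD hιD hιX)

end Ball

/-- in the unit ball of `ℂⁿ`, `n ≥ 2`, the slice `X' × {0}` over a
non-degenerate `X' ⊆ 𝔻` is a Bloch subset (Bloch radius `0`) yet not degenerate. -/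
theorem stmt14 {m : ℕ} (X' : Set ℂ) (hX' : X' ⊆ uDisc)
    (hnd : ¬ Degenerate uDisc X') :
    blochRadius (Metric.ball (0 : EuclideanSpace ℂ (Fin (m + 2))) 1)
        {z ∈ Metric.ball (0 : EuclideanSpace ℂ (Fin (m + 2))) 1 |
          z 0 ∈ X' ∧ ∀ i : Fin (m + 2), i ≠ 0 → z i = 0} = 0 ∧
    ¬ Degenerate (Metric.ball (0 : EuclideanSpace ℂ (Fin (m + 2))) 1)
        {z ∈ Metric.ball (0 : EuclideanSpace ℂ (Fin (m + 2))) 1 |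
          z 0 ∈ X' ∧ ∀ i : Fin (m + 2), i ≠ 0 → z i = 0} := by
  refine ⟨blochRadius_eq_zero_of_interior_eq_empty isOpen_ball ?_,
    not_degenerate_axis_slice 0 hX' hnd⟩
  have hX : {z ∈ Metric.ball (0 : EuclideanSpace ℂ (Fin (m + 2))) 1 |
      z 0 ∈ X' ∧ ∀ i : Fin (m + 2), i ≠ 0 → z i = 0} ⊆ {z | z 1 = 0} :=
    fun z hz => hz.2.2 1 one_ne_zero
  exact subset_empty_iff.1 ((interior_mono hX).trans (interior_setOf_apply_eq_zero 1).subset)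
end
end
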